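/- Let P be a CP-semigroup over a unital subsemigroup S ⊆ ℝ₊^k on a von Neumann algebra M ⊆ B(H), and let (K, u, R, α) be an E-dilation of P such that the central support of the projection u u* in R equals 1 and R is the von Neumann algebra generated by ⋃_{s∈S} α_s(u M u*). Then there is no projection q ∈ R with q ≠ 1 and u u* ≤ q such that the compression a ↦ q a q is multiplicative on R and q is coinvariant for α (i.e. α_s(1−q) ≤ 1−q for all s ∈ S). In other words, a dilation that is minimal in Arveson's sense is minimal. -/

import Mathlib

/- STATEMENT 11: an E-dilation `(K, u, R, α)` of a CP-semigroup `P` over a unital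
subsemigroup `S ⊆ ℝ₊ᵏ` which is minimal in Arveson's sense (the central support of `u u*`
in `R` is `1`, and `R` is generated as a von Neumann algebra by `⋃_{s∈S} α_s(u M u*)`)
admits no projection `q ∈ R`, `q ≠ 1`, `u u* ≤ q`, whose compression is multiplicative on `R`
and which is coinvariant for `α`. -/

open scoped InnerProductSpace ComplexOrder

variable {E : Type*} [NormedAddCommGroup E] [InnerProductSpace ℂ E] [CompleteSpace E]

/-- The map `α` (on the von Neumann algebra with underlying set `M ⊆ B(E)`) is normal:
the composition of every normal functional with `α` is again normal on `M`. -/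
def IsNormalOn (M : Set (E →L[ℂ] E)) (α : (E →L[ℂ] E) → (E →L[ℂ] E)) : Prop :=
  ∀ h g : ℕ → E, Summable (fun n => ‖h n‖ * ‖g n‖) →
    ∃ h' g' : ℕ → E, Summable (fun n => ‖h' n‖ * ‖g' n‖) ∧
      ∀ a ∈ M, ∑' n, ⟪h n, (α a) (g n)⟫_ℂ = ∑' n, ⟪h' n, a (g' n)⟫_ℂ

/-- The map `θ` is completely positive on `M`: for every `n`, every `a₁, …, aₙ ∈ M` and every
`v₁, …, vₙ ∈ E` one has `∑ᵢⱼ ⟪vᵢ, θ(aᵢ* aⱼ) vⱼ⟫ ≥ 0` (the standard equivalent form of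
positivity of the induced maps on all matrix levels). -/
def IsCompletelyPositiveOn (M : Set (E →L[ℂ] E)) (θ : (E →L[ℂ] E) → (E →L[ℂ] E)) : Prop :=
  ∀ (n : ℕ) (a : Fin n → (E →L[ℂ] E)), (∀ i, a i ∈ M) → ∀ v : Fin n → E,
    0 ≤ ∑ i, ∑ j, ⟪v i, (θ (star (a i) * a j)) (v j)⟫_ℂ

/-- `φ` is a CP-semigroup over the subsemigroup `S ⊆ ℝ₊ᵏ` on the von Neumann algebra with
underlying set `M ⊆ B(E)`. -/
def IsCPSemigroupOverOn (S : Set (Fin k → ℝ)) (M : Set (E →L[ℂ] E))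
    (φ : (Fin k → ℝ) → (E →L[ℂ] E) → (E →L[ℂ] E)) : Prop :=
  (∀ s ∈ S, ∀ a ∈ M, φ s a ∈ M) ∧
  (∀ s ∈ S, ∀ a ∈ M, ∀ b ∈ M, φ s (a + b) = φ s a + φ s b) ∧
  (∀ s ∈ S, ∀ (c : ℂ), ∀ a ∈ M, φ s (c • a) = c • φ s a) ∧
  (∀ s ∈ S, ∀ a ∈ M, ‖φ s a‖ ≤ ‖a‖) ∧
  (∀ s ∈ S, IsCompletelyPositiveOn M (φ s)) ∧
  (∀ s ∈ S, IsNormalOn M (φ s)) ∧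
  (∀ s ∈ S, ∀ t ∈ S, ∀ a ∈ M, φ (s + t) a = φ s (φ t a)) ∧
  (∀ a ∈ M, φ 0 a = a) ∧
  (∀ a ∈ M, ∀ h g : E, ContinuousOn (fun s => ⟪(φ s a) h, g⟫_ℂ) S)

/-!
A projection `q ∈ R` whose compression `a ↦ q a q` is multiplicative on `R` commutes with `R`:
for `x = q a - q a q` multiplicativity gives `x x* = q a a* q - q a q a* q = 0`, so `q a = q a q`
for all `a ∈ R`, and applying this to `a*` as well gives `q a = a q`. Hence `q` is central,
and as it dominates `u u*`, whose central support is `1`, we get `q = 1`.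
-/

namespace IsStarProjection

variable {A : Type*} [NonUnitalNormedRing A] [StarRing A] [CStarRing A] {p a : A}

theorem mul_mul_self_eq_of_compression_mul (hp : IsStarProjection p)
    (h : p * a * p * star a * p = p * (a * star a) * p) : p * a * p = p * a := by
  have hpp : p * p = p := hp.isIdempotentElem.eq
  have hstar : star (p * a - p * a * p) = star a * p - p * star a * p := by
    simp only [star_sub, star_mul, hp.isSelfAdjoint.star_eq, mul_assoc]
  have hzero : (p * a - p * a * p) * star (p * a - p * a * p) = 0 := by
    rw [hstar]
    calc (p * a - p * a * p) * (star a * p - p * star a * p)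
        = p * (a * star a) * p - p * a * p * star a * p
          - p * a * p * star a * p + p * a * (p * p) * star a * p := by noncomm_ring
      _ = 0 := by rw [hpp, h]; noncomm_ring
  exact (sub_eq_zero.mp ((CStarRing.mul_star_self_eq_zero_iff _).mp hzero)).symm

theorem commute_of_compression_mul (hp : IsStarProjection p)
    (h : p * a * p * star a * p = p * (a * star a) * p)
    (h' : p * star a * p * a * p = p * (star a * a) * p) : Commute p a := by
  have hright : p * a * p = a * p := by
    simpa only [star_mul, star_star, hp.isSelfAdjoint.star_eq, mul_assoc] using
      congr_arg star (hp.mul_mul_self_eq_of_compression_mul (a := star a) (by simpa using h'))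
  exact (hp.mul_mul_self_eq_of_compression_mul h).symm.trans hright

end IsStarProjection

theorem arveson_minimal_implies_minimal_general
    {H K : Type*} [NormedAddCommGroup H] [InnerProductSpace ℂ H] [CompleteSpace H]
    [NormedAddCommGroup K] [InnerProductSpace ℂ K] [CompleteSpace K]
    {k : ℕ} (S : Set (Fin k → ℝ))
    (R : VonNeumannAlgebra K)
    (α : (Fin k → ℝ) → (K →L[ℂ] K) → (K →L[ℂ] K))
    (u : H →L[ℂ] K)
    -- the central support of `u u*` in `R` is `1`
    (hcentral : ∀ z : K →L[ℂ] K, z ∈ R → (∀ r ∈ R, z * r = r * z) →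
      IsSelfAdjoint z → IsIdempotentElem z →
      (z - u.comp (ContinuousLinearMap.adjoint u)).IsPositive → z = 1) :
    ¬ ∃ q : K →L[ℂ] K, q ∈ R ∧ q ≠ 1 ∧ IsSelfAdjoint q ∧ IsIdempotentElem q ∧
        (q - u.comp (ContinuousLinearMap.adjoint u)).IsPositive ∧
        (∀ a ∈ R, ∀ b ∈ R, q * a * q * b * q = q * (a * b) * q) ∧
        (∀ s ∈ S, ((1 - q) - α s (1 - q)).IsPositive) := by
  rintro ⟨q, hqR, hq1, hqsa, hqidem, hqpos, hmult, -⟩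
  have hq : IsStarProjection q := ⟨hqidem, hqsa⟩
  have hq_central : ∀ r ∈ R, q * r = r * q := fun r hr =>
    (hq.commute_of_compression_mul (hmult r hr _ (star_mem hr))
      (hmult _ (star_mem hr) r hr)).eq
  exact hq1 (hcentral q hqR hq_central hqsa hqidem hqpos)

theorem arveson_minimal_implies_minimal
    {H K : Type*} [NormedAddCommGroup H] [InnerProductSpace ℂ H] [CompleteSpace H]
    [NormedAddCommGroup K] [InnerProductSpace ℂ K] [CompleteSpace K]
    {k : ℕ} (S : Set (Fin k → ℝ))
    (hS0 : (0 : Fin k → ℝ) ∈ S) (hSadd : ∀ s ∈ S, ∀ t ∈ S, s + t ∈ S)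
    (hSnonneg : ∀ s ∈ S, ∀ i, 0 ≤ s i)
    (M : VonNeumannAlgebra H) (R : VonNeumannAlgebra K)
    (P : (Fin k → ℝ) → (H →L[ℂ] H) → (H →L[ℂ] H))
    (hP : IsCPSemigroupOverOn S (M : Set (H →L[ℂ] H)) P)
    (α : (Fin k → ℝ) → (K →L[ℂ] K) → (K →L[ℂ] K))
    (hα : IsCPSemigroupOverOn S (R : Set (K →L[ℂ] K)) α)
    -- each `α_s` is a *-endomorphism
    (hαmul : ∀ s ∈ S, ∀ a ∈ R, ∀ b ∈ R, α s (a * b) = α s a * α s b)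
    (hαstar : ∀ s ∈ S, ∀ a ∈ R, α s (star a) = star (α s a))
    -- `u : H → K` is an isometry with `u* R u = M` (and `u u*`, `u M u* ⊆ R`)
    (u : H →L[ℂ] K) (hu : Isometry u)
    (hcomp : (fun x : K →L[ℂ] K =>
        (ContinuousLinearMap.adjoint u).comp (x.comp u)) '' (R : Set (K →L[ℂ] K))
      = (M : Set (H →L[ℂ] H)))
    (hp_mem : u.comp (ContinuousLinearMap.adjoint u) ∈ R)
    (huMu : ∀ m ∈ M, u.comp (m.comp (ContinuousLinearMap.adjoint u)) ∈ R)
    -- the dilation property `P_s(u* a u) = u* α_s(a) u`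
    (hdil : ∀ s ∈ S, ∀ x ∈ R,
      P s ((ContinuousLinearMap.adjoint u).comp (x.comp u))
        = (ContinuousLinearMap.adjoint u).comp ((α s x).comp u))
    -- the central support of `u u*` in `R` is `1`
    (hcentral : ∀ z : K →L[ℂ] K, z ∈ R → (∀ r ∈ R, z * r = r * z) →
      IsSelfAdjoint z → IsIdempotentElem z →
      (z - u.comp (ContinuousLinearMap.adjoint u)).IsPositive → z = 1)
    -- `R` is generated by `⋃_{s ∈ S} α_s (u M u*)`
    (hgen : ∀ N : VonNeumannAlgebra K,
      (∀ s ∈ S, ∀ m ∈ M, α s (u.comp (m.comp (ContinuousLinearMap.adjoint u))) ∈ N) →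
      ∀ x ∈ R, x ∈ N) :
    ¬ ∃ q : K →L[ℂ] K, q ∈ R ∧ q ≠ 1 ∧ IsSelfAdjoint q ∧ IsIdempotentElem q ∧
        (q - u.comp (ContinuousLinearMap.adjoint u)).IsPositive ∧
        (∀ a ∈ R, ∀ b ∈ R, q * a * q * b * q = q * (a * b) * q) ∧
        (∀ s ∈ S, ((1 - q) - α s (1 - q)).IsPositive) :=
  arveson_minimal_implies_minimal_general S R α u hcentral
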